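/- Any minimal well-graded extension of a family B is a path extension of B. -/

import Mathlib

/-!
For `K, L ∈ B` pick a tight path in `F` from `K` to `K ∪ L`; since `K ⊆ K ∪ L`, such a path
adds one point at a time. The span `G` of all sets on these paths satisfies `B ⊆ G ⊆ F`, so by
minimality it suffices that `G` is well-graded, which follows from augmentation: if `Q ⊄ P` in
`G`, some path set `S ⊆ Q` is not contained in `P`. Walking along a path that starts inside `P`
(every member of `G` contains a member of `B`), the first set leaving `P` has the form
`insert x A` with `A ⊆ P`, and then `insert x P = P ∪ insert x A ∈ G`.
-/

open Finset

variable {α : Type*} [DecidableEq α]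

/-- The span of a family `G`: all unions of nonempty subfamilies of `G`. -/
def Span (G : Finset (Finset α)) : Finset (Finset α) :=
  (G.powerset.filter Finset.Nonempty).image fun H => H.sup id

/-- A family is ∪-closed if it contains the union of each of its nonempty subfamilies. -/
def UnionClosed (F : Finset (Finset α)) : Prop :=
  ∀ H ⊆ F, H.Nonempty → H.sup id ∈ F

/-- `p` is a tight path from `P` to `Q` inside the family `F`. -/
def IsTightPath (F : Finset (Finset α)) (P Q : Finset α) (p : List (Finset α)) : Prop :=
  p.head? = some P ∧ p.getLast? = some Q ∧
  p.length = (symmDiff P Q).card + 1 ∧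
  (∀ S ∈ p, S ∈ F) ∧
  List.Chain' (fun A B => (symmDiff A B).card = 1) p

/-- A family is well-graded if any two distinct members are joined by a tight path. -/
def WellGraded (F : Finset (Finset α)) : Prop :=
  ∀ P ∈ F, ∀ Q ∈ F, P ≠ Q → ∃ p, IsTightPath F P Q p

/-- `B` is a base of `F`: a minimal subfamily of `F` spanning `F`. -/
def IsBase (B F : Finset (Finset α)) : Prop :=
  B ⊆ F ∧ Span B = F ∧ ∀ H ⊆ B, Span H = F → H = B

/-- `A` is an atom of `F` at `x`: an inclusion-minimal member of `F` containing `x`. -/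
def IsAtomAt (F : Finset (Finset α)) (x : α) (A : Finset α) : Prop :=
  A ∈ F ∧ x ∈ A ∧ ∀ B ∈ F, x ∈ B → B ⊆ A → B = A

/-- `A` is an atom of `F`: either the empty set (if it is in `F`) or an atom at some point. -/
def IsAtomOf (F : Finset (Finset α)) (A : Finset α) : Prop :=
  (A = ∅ ∧ A ∈ F) ∨ ∃ x, IsAtomAt F x A

/-- The surmise function: the collection of atoms of `F` at `x`. -/
def surmise (F : Finset (Finset α)) (x : α) : Finset (Finset α) :=
  F.filter fun A => x ∈ A ∧ ∀ B ∈ F, x ∈ B → B ⊆ A → B = A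

/-- `{σ(x) : x ∈ ∪F}` forms a partition of `B \ {∅}`. -/
def SurmisePartition (F B : Finset (Finset α)) : Prop :=
  (∀ x ∈ F.sup id, ∀ y ∈ F.sup id,
      surmise F x = surmise F y ∨ Disjoint (surmise F x) (surmise F y)) ∧
  (F.sup id).sup (surmise F) = B.erase ∅

/-- The endpoints of `X` in the family `B`: elements of `X` lying in no proper
subset of `X` belonging to `B`. -/
def endpoints (B : Finset (Finset α)) (X : Finset α) : Finset α :=
  X \ (B.filter fun Y => Y ⊂ X).sup id

/-- A family is discriminative if points contained in the same members are equal. -/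
def Discriminative (F : Finset (Finset α)) : Prop :=
  ∀ u ∈ F.sup id, ∀ v ∈ F.sup id, (∀ S ∈ F, (u ∈ S ↔ v ∈ S)) → u = v

open scoped symmDiff

namespace Finset

lemma card_symmDiff_le_add (s t u : Finset α) :
    (s ∆ u).card ≤ (s ∆ t).card + (t ∆ u).card :=
  (card_le_card (symmDiff_triangle s t u)).trans (card_union_le _ _)

lemma mem_of_card_singleton_symmDiff_lt {x : α} {s : Finset α} (h : ({x} ∆ s).card < s.card) :
    x ∈ s := by
  by_contra hx
  rw [symmDiff_eq_union (disjoint_singleton_left.2 hx), singleton_union,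
    card_insert_of_notMem hx] at h
  omega

lemma symmDiff_insert_self {x : α} {P : Finset α} (hx : x ∉ P) : P ∆ insert x P = {x} := by
  ext y
  by_cases hy : y = x
  · subst hy; simp [mem_symmDiff, hx]
  · simp [mem_symmDiff, hy]

lemma insert_symmDiff_of_mem_sdiff {x : α} {P Q : Finset α} (hx : x ∈ Q \ P) :
    insert x P ∆ Q = (P ∆ Q).erase x := by
  ext y
  by_cases hy : y = x
  · subst hy; simp_all [mem_symmDiff]
  · simp [mem_symmDiff, hy]

lemma covBy_of_card_symmDiff_eq_one {A C Y : Finset α} (hAY : A ⊆ Y) (hAC : (A ∆ C).card = 1)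
    (hlt : (C ∆ Y).card < (A ∆ Y).card) : A ⋖ C ∧ C ⊆ Y := by
  obtain ⟨x, hx⟩ := card_eq_one.1 hAC
  have hxAY : x ∈ A ∆ Y := by
    apply mem_of_card_singleton_symmDiff_lt
    rwa [← hx, symmDiff_symmDiff_symmDiff_comm, symmDiff_self, bot_symmDiff]
  have hxA : x ∉ A := fun h => (mem_symmDiff.1 hxAY).elim (fun h' => h'.2 (hAY h)) (·.2 h)
  have hC : C = insert x A := by
    rw [← symmDiff_symmDiff_cancel_left A C, hx, symmDiff_comm,
      symmDiff_eq_union (disjoint_singleton_left.2 hxA), singleton_union]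
  subst hC
  exact ⟨covBy_iff_exists_insert.2 ⟨x, hxA, rfl⟩,
    insert_subset ((mem_symmDiff.1 hxAY).resolve_left (fun h => hxA h.1)).1 hAY⟩

end Finset

lemma List.IsChain.head_le_of_mem {β : Type*} [Preorder β] {a b : β} {l : List β}
    (h : (a :: l).IsChain (· ⋖ ·)) (hb : b ∈ a :: l) : a ≤ b := by
  rcases List.mem_cons.1 hb with rfl | hb
  · exact le_rfl
  · exact List.rel_of_pairwise_cons (h.imp fun _ _ => CovBy.le).pairwise hb

lemma card_symmDiff_add_one_le_length : ∀ {p : List (Finset α)} {X Y : Finset α},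
    p.IsChain (fun A B => (A ∆ B).card = 1) → p.head? = some X → p.getLast? = some Y →
    (X ∆ Y).card + 1 ≤ p.length
  | [], _, _, _, hX, _ => by simp at hX
  | [A], X, Y, _, hX, hY => by
    obtain rfl : A = X := by simpa using hX
    obtain rfl : A = Y := by simpa using hY
    simp
  | A :: C :: l, X, Y, hc, hX, hY => by
    obtain rfl : A = X := by simpa using hX
    rw [List.getLast?_cons_cons] at hY
    obtain ⟨hAC, hc'⟩ := List.isChain_cons_cons.1 hc
    have ih := card_symmDiff_add_one_le_length hc' rfl hY
    have := card_symmDiff_le_add A C Y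
    simp only [List.length_cons] at ih ⊢
    omega

lemma exists_insert_mem_of_isChain_covBy {P : Finset α} :
    ∀ {p : List (Finset α)} {K S : Finset α}, p.IsChain (· ⋖ ·) → p.head? = some K → K ⊆ P →
      S ∈ p → ¬ S ⊆ P → ∃ A ⊆ P, ∃ x ∈ S \ P, insert x A ∈ p
  | [], _, _, _, hK, _, _, _ => by simp at hK
  | [A], K, S, _, hK, hKP, hS, hSP => by
    obtain rfl : A = K := by simpa using hK
    obtain rfl : S = A := by simpa using hS
    exact absurd hKP hSP
  | A :: C :: l, K, S, hc, hK, hKP, hS, hSP => by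
    obtain rfl : A = K := by simpa using hK
    obtain ⟨hAC, hc'⟩ := List.isChain_cons_cons.1 hc
    obtain ⟨x, hxA, rfl⟩ := covBy_iff_exists_insert.1 hAC
    have hS' : S ∈ insert x A :: l :=
      (List.mem_cons.1 hS).resolve_left (by rintro rfl; exact hSP hKP)
    by_cases hxP : x ∈ P
    · obtain ⟨B, hBP, y, hy, hmem⟩ :=
        exists_insert_mem_of_isChain_covBy hc' rfl (insert_subset hxP hKP) hS' hSP
      exact ⟨B, hBP, y, hy, List.mem_cons_of_mem _ hmem⟩
    · exact ⟨A, hKP, x, mem_sdiff.2 ⟨hc'.head_le_of_mem hS' (mem_insert_self x A), hxP⟩,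
        by simp⟩

namespace IsTightPath

variable {F : Finset (Finset α)} {X Y : Finset α} {p : List (Finset α)}

lemma singleton (hX : X ∈ F) : IsTightPath F X X [X] :=
  ⟨rfl, rfl, by simp, by simpa using hX, List.isChain_singleton X⟩

lemma tail {A C : Finset α} {l : List (Finset α)} (h : IsTightPath F A Y (A :: C :: l)) :
    IsTightPath F C Y (C :: l) := by
  obtain ⟨-, hY, hlen, hF, hc⟩ := h
  rw [List.getLast?_cons_cons] at hY
  obtain ⟨hAC, hc'⟩ := List.isChain_cons_cons.1 hc
  have hlb := card_symmDiff_add_one_le_length hc' rfl hY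
  have htri := card_symmDiff_le_add A C Y
  simp only [List.length_cons] at hlen hlb
  exact ⟨rfl, hY, by simp only [List.length_cons]; omega,
    fun S hS => hF S (List.mem_cons_of_mem _ hS), hc'⟩

lemma cons {A : Finset α} (h : IsTightPath F X Y p) (hA : A ∈ F) (hAX : (A ∆ X).card = 1)
    (hAY : (A ∆ Y).card = (X ∆ Y).card + 1) : IsTightPath F A Y (A :: p) := by
  obtain ⟨hX, hY, hlen, hF, hc⟩ := h
  obtain _ | ⟨B, l⟩ := p
  · simp at hX
  obtain rfl : B = X := by simpa using hX
  refine ⟨rfl, by rwa [List.getLast?_cons_cons], by simp [hlen, hAY], ?_,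
    List.isChain_cons_cons.2 ⟨hAX, hc⟩⟩
  simpa [hA] using hF

lemma cons_insert {x : α} (h : IsTightPath F (insert x X) Y p) (hX : X ∈ F) (hx : x ∈ Y \ X) :
    IsTightPath F X Y (X :: p) := by
  refine h.cons hX (by rw [symmDiff_insert_self (mem_sdiff.1 hx).2, card_singleton]) ?_
  rw [insert_symmDiff_of_mem_sdiff hx, card_erase_add_one]
  exact mem_symmDiff.2 (.inr (mem_sdiff.1 hx))

lemma reverse (h : IsTightPath F X Y p) : IsTightPath F Y X p.reverse := by
  obtain ⟨hX, hY, hlen, hF, hc⟩ := h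
  refine ⟨by rwa [List.head?_reverse], by rwa [List.getLast?_reverse], ?_,
    by simpa using hF, List.isChain_reverse.2 (hc.imp fun A B h => ?_)⟩
  · rw [List.length_reverse, hlen, symmDiff_comm]
  · rwa [symmDiff_comm]

lemma isChain_covBy (h : IsTightPath F X Y p) (hXY : X ⊆ Y) :
    p.IsChain (· ⋖ ·) ∧ ∀ S ∈ p, S ⊆ Y := by
  induction p generalizing X with
  | nil => simp [IsTightPath] at h
  | cons A l ih =>
    obtain rfl : A = X := by simpa using h.1
    obtain _ | ⟨C, l⟩ := l
    · simpa using hXY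
    have htail := h.tail
    have hlt : (C ∆ Y).card < (A ∆ Y).card := by
      have hlen := h.2.2.1
      have hlen' := htail.2.2.1
      simp only [List.length_cons] at hlen hlen'
      omega
    obtain ⟨hAC, hCY⟩ :=
      covBy_of_card_symmDiff_eq_one hXY (List.isChain_cons_cons.1 h.2.2.2.2).1 hlt
    obtain ⟨ihc, ihY⟩ := ih htail hCY
    exact ⟨List.isChain_cons_cons.2 ⟨hAC, ihc⟩, by simpa [hXY] using ihY⟩

lemma subset_of_mem (h : IsTightPath F X Y p) (hXY : X ⊆ Y) {S : Finset α} (hS : S ∈ p) :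
    X ⊆ S ∧ S ⊆ Y := by
  obtain _ | ⟨A, l⟩ := p
  · simp at hS
  obtain rfl : A = X := by simpa using h.1
  exact ⟨(h.isChain_covBy hXY).1.head_le_of_mem hS, (h.isChain_covBy hXY).2 S hS⟩

end IsTightPath

lemma WellGraded.exists_tightPath {F : Finset (Finset α)} (hF : WellGraded F) {P Q : Finset α}
    (hP : P ∈ F) (hQ : Q ∈ F) : ∃ p, IsTightPath F P Q p := by
  obtain rfl | hPQ := eq_or_ne P Q
  · exact ⟨[P], .singleton hP⟩
  · exact hF P hP Q hQ hPQ

lemma WellGraded.of_exists_insert_mem {G : Finset (Finset α)}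
    (hG : ∀ P ∈ G, ∀ Q ∈ G, ¬ Q ⊆ P → ∃ x ∈ Q \ P, insert x P ∈ G) : WellGraded G := by
  suffices h : ∀ n, ∀ P ∈ G, ∀ Q ∈ G, (P ∆ Q).card = n → ∃ p, IsTightPath G P Q p from
    fun P hP Q hQ _ => h _ P hP Q hQ rfl
  intro n
  induction n with
  | zero =>
    intro P hP Q hQ h
    obtain rfl := symmDiff_eq_empty.1 (card_eq_zero.1 h)
    exact ⟨[P], .singleton hP⟩
  | succ n ih =>
    intro P hP Q hQ hn
    wlog hQP : ¬ Q ⊆ P generalizing P Q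
    · have hPQ : ¬ P ⊆ Q := fun h => by simp [subset_antisymm h (not_not.1 hQP)] at hn
      obtain ⟨p, hp⟩ := this Q hQ P hP (by rwa [symmDiff_comm]) hPQ
      exact ⟨_, hp.reverse⟩
    obtain ⟨x, hx, hxG⟩ := hG P hP Q hQ hQP
    have hxPQ : x ∈ P ∆ Q := mem_symmDiff.2 (.inr (mem_sdiff.1 hx))
    obtain ⟨p, hp⟩ := ih _ hxG Q hQ <| by
      rw [insert_symmDiff_of_mem_sdiff hx, card_erase_of_mem hxPQ, hn, Nat.add_sub_cancel]
    exact ⟨_, hp.cons_insert hP hx⟩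

lemma mem_span {G : Finset (Finset α)} {S : Finset α} :
    S ∈ Span G ↔ ∃ H ⊆ G, H.Nonempty ∧ H.sup id = S := by
  simp [Span, and_assoc]

lemma subset_span (G : Finset (Finset α)) : G ⊆ Span G :=
  fun S hS => mem_span.2 ⟨{S}, singleton_subset_iff.2 hS, singleton_nonempty S, sup_singleton⟩

lemma span_subset {G F : Finset (Finset α)} (hGF : G ⊆ F) (hF : UnionClosed F) : Span G ⊆ F := by
  intro S hS
  obtain ⟨H, hHG, hH, rfl⟩ := mem_span.1 hS
  exact hF H (hHG.trans hGF) hH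

lemma sup_filter_subset_of_mem_span {G : Finset (Finset α)} {S : Finset α} (hS : S ∈ Span G) :
    (G.filter (· ⊆ S)).Nonempty ∧ (G.filter (· ⊆ S)).sup id = S := by
  obtain ⟨H, hHG, hH, rfl⟩ := mem_span.1 hS
  have hHf : H ⊆ G.filter (· ⊆ H.sup id) :=
    fun T hT => mem_filter.2 ⟨hHG hT, le_sup (f := id) hT⟩
  exact ⟨hH.mono hHf, le_antisymm (Finset.sup_le fun T hT => (mem_filter.1 hT).2) (sup_mono hHf)⟩

lemma unionClosed_span (G : Finset (Finset α)) : UnionClosed (Span G) := by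
  intro H hH hne
  refine mem_span.2 ⟨H.biUnion fun S => G.filter (· ⊆ S),
    biUnion_subset.2 fun _ _ => filter_subset _ _, ?_, ?_⟩
  · obtain ⟨S, hS⟩ := hne
    obtain ⟨T, hT⟩ := (sup_filter_subset_of_mem_span (hH hS)).1
    exact ⟨T, mem_biUnion.2 ⟨S, hS, hT⟩⟩
  · rw [sup_biUnion]
    exact sup_congr rfl fun S hS => (sup_filter_subset_of_mem_span (hH hS)).2

lemma UnionClosed.union_mem {F : Finset (Finset α)} (hF : UnionClosed F) {P Q : Finset α}
    (hP : P ∈ F) (hQ : Q ∈ F) : P ∪ Q ∈ F := by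
  simpa using hF {P, Q} (insert_subset hP (singleton_subset_iff.2 hQ)) (insert_nonempty _ _)

def pathSets (B : Finset (Finset α)) (π : Finset α → Finset α → List (Finset α)) :
    Finset (Finset α) :=
  (B ×ˢ B).biUnion fun KL => (π KL.1 KL.2).toFinset

lemma mem_pathSets {B : Finset (Finset α)} {π : Finset α → Finset α → List (Finset α)}
    {S : Finset α} : S ∈ pathSets B π ↔ ∃ K ∈ B, ∃ L ∈ B, S ∈ π K L := by
  simp [pathSets]

section PathExtension

variable {F B : Finset (Finset α)} {π : Finset α → Finset α → List (Finset α)}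

lemma exists_subset_of_mem_span_pathSets
    (hπ : ∀ K ∈ B, ∀ L ∈ B, IsTightPath F K (K ∪ L) (π K L)) {P : Finset α}
    (hP : P ∈ Span (pathSets B π)) : ∃ K ∈ B, K ⊆ P := by
  obtain ⟨H, hH, ⟨S, hS⟩, rfl⟩ := mem_span.1 hP
  obtain ⟨K, hK, L, hL, hSKL⟩ := mem_pathSets.1 (hH hS)
  exact ⟨K, hK,
    ((hπ K hK L hL).subset_of_mem subset_union_left hSKL).1.trans (le_sup (f := id) hS)⟩

lemma exists_insert_mem_span_pathSets_of_subset
    (hπ : ∀ K ∈ B, ∀ L ∈ B, IsTightPath F K (K ∪ L) (π K L)) {P K L S : Finset α}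
    (hP : P ∈ Span (pathSets B π)) (hK : K ∈ B) (hL : L ∈ B) (hKP : K ⊆ P) (hS : S ∈ π K L)
    (hSP : ¬ S ⊆ P) : ∃ x ∈ S \ P, insert x P ∈ Span (pathSets B π) := by
  obtain ⟨A, hAP, x, hx, hxA⟩ := exists_insert_mem_of_isChain_covBy
    ((hπ K hK L hL).isChain_covBy subset_union_left).1 (hπ K hK L hL).1 hKP hS hSP
  refine ⟨x, hx, ?_⟩
  rw [← union_eq_left.2 hAP, ← union_insert]
  exact (unionClosed_span _).union_mem hP (subset_span _ (mem_pathSets.2 ⟨K, hK, L, hL, hxA⟩))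

lemma exists_insert_mem_span_pathSets
    (hπ : ∀ K ∈ B, ∀ L ∈ B, IsTightPath F K (K ∪ L) (π K L)) {P S : Finset α}
    (hP : P ∈ Span (pathSets B π)) (hS : S ∈ pathSets B π) (hSP : ¬ S ⊆ P) :
    ∃ x ∈ S \ P, insert x P ∈ Span (pathSets B π) := by
  obtain ⟨K, hK, L, hL, hSKL⟩ := mem_pathSets.1 hS
  by_cases hKP : K ⊆ P
  · exact exists_insert_mem_span_pathSets_of_subset hπ hP hK hL hKP hSKL hSP
  -- Walk instead from some `K₀ ⊆ P` to `K₀ ∪ K`: the point leaving `P` lies in `K ⊆ S`.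
  obtain ⟨K₀, hK₀, hK₀P⟩ := exists_subset_of_mem_span_pathSets hπ hP
  obtain ⟨x, hx, hxP⟩ := exists_insert_mem_span_pathSets_of_subset hπ hP hK₀ hK hK₀P
    (List.mem_of_mem_getLast? (hπ K₀ hK₀ K hK).2.1) fun h => hKP (union_subset_iff.1 h).2
  obtain ⟨hxK₀K, hxP'⟩ := mem_sdiff.1 hx
  have hxK : x ∈ K := (mem_union.1 hxK₀K).resolve_left fun h => hxP' (hK₀P h)
  exact ⟨x, mem_sdiff.2 ⟨((hπ K hK L hL).subset_of_mem subset_union_left hSKL).1 hxK, hxP'⟩,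
    hxP⟩

lemma wellGraded_span_pathSets (hπ : ∀ K ∈ B, ∀ L ∈ B, IsTightPath F K (K ∪ L) (π K L)) :
    WellGraded (Span (pathSets B π)) := by
  refine WellGraded.of_exists_insert_mem fun P hP Q hQ hQP => ?_
  obtain ⟨H, hH, -, rfl⟩ := mem_span.1 hQ
  obtain ⟨S, hSH, hSP⟩ : ∃ S ∈ H, ¬ S ⊆ P := by
    by_contra! h
    exact hQP (Finset.sup_le h)
  obtain ⟨x, hx, hxP⟩ := exists_insert_mem_span_pathSets hπ hP (hH hSH) hSP
  exact ⟨x, mem_sdiff.2 ⟨le_sup (f := id) hSH (mem_sdiff.1 hx).1, (mem_sdiff.1 hx).2⟩, hxP⟩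

end PathExtension

/-- Any minimal well-graded extension is a path extension. -/
theorem minimal_wg_extension_is_path_extension (B F : Finset (Finset α))
    (hBF : B ⊆ F) (hF : UnionClosed F) (hwg : WellGraded F)
    (hmin : ∀ F' : Finset (Finset α),
      UnionClosed F' → B ⊆ F' → F' ⊂ F → ¬ WellGraded F') :
    ∃ π : Finset α → Finset α → List (Finset α),
      (∀ K ∈ B, ∀ L ∈ B, IsTightPath ((B.sup id).powerset) K (K ∪ L) (π K L)) ∧
      ∃ B' : Finset (Finset α),
        (∀ S : Finset α, S ∈ B' ↔ ∃ K ∈ B, ∃ L ∈ B, S ∈ π K L) ∧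
        Span B' = F := by
  choose! π hπ using fun K (hK : K ∈ B) L (hL : L ∈ B) =>
    hwg.exists_tightPath (hBF hK) (hF.union_mem (hBF hK) (hBF hL))
  have hBG : B ⊆ Span (pathSets B π) := fun K hK =>
    subset_span _ (mem_pathSets.2 ⟨K, hK, K, hK, List.mem_of_mem_head? (hπ K hK K hK).1⟩)
  have hGF : Span (pathSets B π) ⊆ F := span_subset (fun S hS => by
    obtain ⟨K, hK, L, hL, hS⟩ := mem_pathSets.1 hS
    exact (hπ K hK L hL).2.2.2.1 S hS) hF
  have hGF_eq : Span (pathSets B π) = F := by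
    by_contra hne
    exact hmin _ (unionClosed_span _) hBG (_root_.ssubset_iff_subset_ne.2 ⟨hGF, hne⟩)
      (wellGraded_span_pathSets hπ)
  refine ⟨π, fun K hK L hL => ?_, pathSets B π, fun S => mem_pathSets, hGF_eq⟩
  obtain ⟨hK', hL', hlen, -, hc⟩ := hπ K hK L hL
  refine ⟨hK', hL', hlen, fun S hS => mem_powerset.2 ?_, hc⟩
  exact ((hπ K hK L hL).subset_of_mem subset_union_left hS).2.trans
    (union_subset (le_sup (f := id) hK) (le_sup (f := id) hL))
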